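/- arXiv:1608.07144 — 3 statements merged into one kernel-verified Lean document; each statement's English description precedes it below -/
import Mathlib

section
/- Let κ be an infinite cardinal with ω₁ ≤ κ. Then there exist a set Z and a free filter p on Z such that the filter space Z_p satisfies ψ(Z_p) = ω₁ and a(Z_p) = κ, yet Z_p does not admit any separately continuous selection relation. -/
open Set

universe u v w y

/-- The filter space topology on `Option X`: every point `some x` is isolated, and the
neighborhoods of the extra point `none` are the sets `P ∪ {none}` with `P ∈ p`. -/
def filterTop {X : Type u} (p : Filter X) : TopologicalSpace (Option X) where
  IsOpen U := none ∈ U → (Option.some ⁻¹' U) ∈ p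
  isOpen_univ := fun _ => by simp
  isOpen_inter := fun U V hU hV h => by
    rw [Set.preimage_inter]
    exact Filter.inter_mem (hU h.1) (hV h.2)
  isOpen_sUnion := fun S hS h => by
    rw [Set.mem_sUnion] at h
    obtain ⟨U, hUS, hU⟩ := h
    exact Filter.mem_of_superset (hS U hUS hU)
      (Set.preimage_mono (Set.subset_sUnion_of_mem hUS))

/-- A filter is free if `∅ ∉ p` and the intersection of all its members is empty. -/
def IsFree {X : Type u} (p : Filter X) : Prop :=
  (∅ : Set X) ∉ p ∧ ⋂₀ {P : Set X | P ∈ p} = ∅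

/-- A family of sets is nested if any two members are comparable under inclusion. -/
def Nested {X : Type u} (F : Set (Set X)) : Prop :=
  ∀ P ∈ F, ∀ Q ∈ F, P ⊆ Q ∨ Q ⊆ P

/-- The order topology of a linear order: generated by the open rays. -/
def ordTop {Z : Type u} (r : LinearOrder Z) : TopologicalSpace Z :=
  TopologicalSpace.generateFrom
    {S : Set Z | ∃ a : Z, S = {z | r.lt z a} ∨ S = {z | r.lt a z}}

/-- `(Z, t)` is weakly orderable by the linear order `r`: the order topology of `r`
is contained in `t`. -/
def WOBy {Z : Type u} (t : TopologicalSpace Z) (r : LinearOrder Z) : Prop :=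
  ∀ S : Set Z, (ordTop r).IsOpen S → t.IsOpen S

def WeaklyOrderable {Z : Type u} (t : TopologicalSpace Z) : Prop :=
  ∃ r : LinearOrder Z, WOBy t r

/-- Weakly `p`-orderable: weakly orderable by a linear order in which `p` is the maximum. -/
def WeaklyPOrderable {Z : Type u} (t : TopologicalSpace Z) (p : Z) : Prop :=
  ∃ r : LinearOrder Z, WOBy t r ∧ ∀ z : Z, r.le z p

def Orderable {Z : Type u} (t : TopologicalSpace Z) : Prop :=
  ∃ r : LinearOrder Z, ordTop r = t

/-- `p`-orderable: orderable by a linear order in which `p` is the maximum. -/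
def POrderable {Z : Type u} (t : TopologicalSpace Z) (p : Z) : Prop :=
  ∃ r : LinearOrder Z, ordTop r = t ∧ ∀ z : Z, r.le z p

/-- The approaching number of a point `p`: the least cardinality of a set
`A ⊆ Z \ {p}` with `p ∈ closure A`. -/
noncomputable def aNum {Z : Type u} (t : TopologicalSpace Z) (p : Z) : Cardinal.{u} :=
  sInf {c : Cardinal.{u} | ∃ A : Set Z, p ∉ A ∧ p ∈ @closure Z t A ∧ c = Cardinal.mk ↥A}

/-- The pseudo-character of a point `p`: the least cardinality of a family of open sets
whose intersection is `{p}`. -/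
noncomputable def psiNum {Z : Type u} (t : TopologicalSpace Z) (p : Z) : Cardinal.{u} :=
  sInf {c : Cardinal.{u} | ∃ Us : Set (Set Z),
    (∀ V ∈ Us, t.IsOpen V) ∧ ⋂₀ Us = {p} ∧ c = Cardinal.mk ↥Us}

/-- The approaching number of a space: minimum over non-isolated points. -/
noncomputable def aSp {Z : Type u} (t : TopologicalSpace Z) : Cardinal.{u} :=
  sInf {c : Cardinal.{u} | ∃ p : Z, ¬ t.IsOpen ({p} : Set Z) ∧ c = aNum t p}

/-- The pseudo-character of a space: supremum over points. -/
noncomputable def psiSp {Z : Type u} (t : TopologicalSpace Z) : Cardinal.{u} :=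
  ⨆ p : Z, psiNum t p

/-- `‖p‖ = min {|P| : P ∈ p}`. -/
noncomputable def fNorm {X : Type u} (p : Filter X) : Cardinal.{u} :=
  sInf {c : Cardinal.{u} | ∃ P ∈ p, c = Cardinal.mk ↥P}

/-- A selection relation: total and antisymmetric. -/
def SelRel {Z : Type u} (R : Z → Z → Prop) : Prop :=
  (∀ x y : Z, R x y ∨ R y x) ∧ (∀ x y : Z, R x y → R y x → x = y)

/-- Separate continuity of a selection relation: the open rays are open. -/
def SepCont {Z : Type u} (t : TopologicalSpace Z) (R : Z → Z → Prop) : Prop :=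
  ∀ x : Z, t.IsOpen {z | R z x ∧ z ≠ x} ∧ t.IsOpen {z | R x z ∧ x ≠ z}

/-- Continuity of a selection relation (Gutev–Nogura characterization). -/
def ContSel {Z : Type u} (t : TopologicalSpace Z) (R : Z → Z → Prop) : Prop :=
  ∀ x y : Z, R x y → x ≠ y →
    ∃ U V : Set Z, t.IsOpen U ∧ t.IsOpen V ∧ x ∈ U ∧ y ∈ V ∧
      ∀ u ∈ U, ∀ v ∈ V, R u v ∧ u ≠ v

/-- The subspace topology. -/
def subTop {Z : Type u} (t : TopologicalSpace Z) (S : Set Z) : TopologicalSpace ↥S :=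
  TopologicalSpace.induced Subtype.val t

/-- The product topology. -/
def prodTop {A : Type u} {B : Type v} (tA : TopologicalSpace A) (tB : TopologicalSpace B) :
    TopologicalSpace (A × B) :=
  TopologicalSpace.induced Prod.fst tA ⊓ TopologicalSpace.induced Prod.snd tB

/-- `C` is a club (closed unbounded) subset of the ordinal `o`. -/
def Club (o : Ordinal.{u}) (C : Set Ordinal.{u}) : Prop :=
  C ⊆ Set.Iio o ∧ (∀ α < o, ∃ β ∈ C, α ≤ β) ∧
  (∀ α < o, (α ≠ 0 ∧ ∀ a < α, Order.succ a < α) → (∀ β < α, ∃ γ ∈ C, β ≤ γ ∧ γ < α) → α ∈ C)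

/-- `S` is a stationary subset of the ordinal `o`. -/
def StationaryIn (o : Ordinal.{u}) (S : Set Ordinal.{u}) : Prop :=
  S ⊆ Set.Iio o ∧ ∀ C : Set Ordinal.{u}, Club o C → (S ∩ C).Nonempty

/-!
Take `Z = W × J` with `|W| = κ⁺` and `|J| = ω₁`, and let `p` consist of the sets containing all
but fewer than `κ` points outside finitely many columns `W × {j}`. The `ω₁` column complements
intersect in `∅`, whereas countably many members of `p` all omit fewer than `κ` points of some
column, so `ψ = ω₁`. The complement of a set of fewer than `κ` points lies in `p`, whereas
`W₀ × J` with `|W₀| = κ` meets every member of `p`, so `a = κ`.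

A separately continuous selection `≺` makes `{y | x ≺ y}` a member of `p` whenever `x ≺ p`, and
`{y | y ≺ x}` one whenever `p ≺ x`. As every column has `κ⁺` points, uncountably many columns
have more than `κ` points on the same side of `p`, and there two points `x, y` with `x ≺ y` and
`y ≺ x` can be found.
-/

open Cardinal

namespace Cardinal

theorem mk_iUnion_le_of_le {α ι : Type u} {κ : Cardinal.{u}} (hκ : ℵ₀ ≤ κ) {f : ι → Set α}
    (hι : #ι ≤ κ) (hf : ∀ i, #(f i) ≤ κ) : #(⋃ i, f i) ≤ κ :=
  (mk_iUnion_le f).trans ((mul_le_mul' hι (ciSup_le' hf)).trans (mul_eq_self hκ).le)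

theorem exists_mem_notMem_of_mk_lt {α : Type u} {s t : Set α} (h : #s < #t) :
    ∃ x ∈ t, x ∉ s := by
  by_contra! hts
  exact (mk_le_mk_of_subset hts).not_gt h

theorem lt_mk_or_lt_mk_of_lt_mk_union {α : Type u} {κ : Cardinal.{u}} (hκ : ℵ₀ ≤ κ)
    {s t : Set α} (h : κ < #(s ∪ t : Set α)) : κ < #s ∨ κ < #t := by
  by_contra! hst
  exact ((mk_union_le s t).trans ((add_le_add hst.1 hst.2).trans (add_eq_self hκ).le)).not_gt h

theorem mk_finset_le_of_le {α : Type u} {κ : Cardinal.{u}} (hκ : ℵ₀ ≤ κ) (hα : #α ≤ κ) :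
    #(Finset α) ≤ κ := by
  classical
  exact (mk_le_of_surjective List.toFinset_surjective).trans
    ((mk_list_le_max α).trans (max_le hκ hα))

theorem exists_subset_lt_mk_forall_eq {α β : Type u} {κ : Cardinal.{u}} (hκ : ℵ₀ ≤ κ)
    (hβ : #β ≤ κ) {s : Set α} (hs : κ < #s) (f : α → β) :
    ∃ b, ∃ t ⊆ s, κ < #t ∧ ∀ x ∈ t, f x = b := by
  have hcof : #β < (Order.succ κ).ord.cof := by
    rw [(isRegular_succ hκ).cof_ord]
    exact hβ.trans_lt (Order.lt_succ κ)
  obtain ⟨b, t, hts, ht, hf⟩ := infinite_pigeonhole_set (fun x : s => f x) (Order.succ κ)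
    (Order.succ_le_of_lt hs) (hκ.trans (Order.le_succ κ)) hcof
  exact ⟨b, t, hts, Order.succ_le_iff.1 ht, fun x hx => hf hx⟩

theorem exists_mem_mem_notMem_notMem {α : Type u} {κ : Cardinal.{u}} (hκ : ℵ₀ ≤ κ)
    {s t : Set α} (hs : κ ≤ #s) (ht : κ < #t) (B : α → Set α) (hB : ∀ x ∈ s ∪ t, #(B x) < κ) :
    ∃ x ∈ s, ∃ y ∈ t, y ∉ B x ∧ x ∉ B y := by
  obtain ⟨A, hAs, hA⟩ := le_mk_iff_exists_subset.1 hs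
  have hsmall : #(⋃ x : A, B x) ≤ κ :=
    mk_iUnion_le_of_le hκ hA.le fun x => (hB x (Or.inl (hAs x.2))).le
  obtain ⟨y, hyt, hy⟩ := exists_mem_notMem_of_mk_lt (hsmall.trans_lt ht)
  obtain ⟨x, hxA, hx⟩ := exists_mem_notMem_of_mk_lt (hA ▸ hB y (Or.inr hyt))
  exact ⟨x, hAs hxA, y, hyt, fun hyx => hy (mem_iUnion.2 ⟨⟨x, hxA⟩, hyx⟩), hx⟩

end Cardinal

theorem Set.exists_mem_mem_notMem_finset_of_not_countable {J : Type u} {T : Set J}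
    (hT : ¬ T.Countable) (F : J → Finset J) : ∃ a ∈ T, ∃ k ∈ T, k ∉ F a ∧ a ∉ F k := by
  obtain ⟨E, hET, hEc, hEi⟩ :=
    Set.Infinite.exists_subset_countable_infinite fun hfin : T.Finite => hT hfin.countable
  have hC : (E ∪ ⋃ a ∈ E, (F a : Set J)).Countable :=
    hEc.union (hEc.biUnion fun a _ => (F a).countable_toSet)
  obtain ⟨k, hkT, hkC⟩ : ∃ k ∈ T, k ∉ E ∪ ⋃ a ∈ E, (F a : Set J) := by
    by_contra! hTC
    exact hT (hC.mono hTC)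
  obtain ⟨a, haE, hak⟩ := hEi.exists_notMem_finset (F k)
  exact ⟨a, hET haE, k, hkT, fun hka => hkC (Or.inr (mem_biUnion haE hka)), hak⟩

section FilterSpace

variable {X : Type u} (p : Filter X)

theorem preimage_some_insert_none (P : Set X) : some ⁻¹' insert none (some '' P) = P := by
  ext x
  simp

theorem isOpen_filterTop_insert_none {P : Set X} (hP : P ∈ p) :
    (filterTop p).IsOpen (insert none (some '' P)) := fun _ => by
  rwa [preimage_some_insert_none]

theorem mem_closure_none_filterTop_iff {A : Set (Option X)} (hA : none ∉ A) :
    none ∈ @closure _ (filterTop p) A ↔ (some ⁻¹' A)ᶜ ∉ p := by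
  let := filterTop p
  rw [mem_closure_iff]
  constructor
  · intro h hAc
    obtain ⟨o, hoU, hoA⟩ := h _ (isOpen_filterTop_insert_none p hAc) (mem_insert _ _)
    obtain rfl | ⟨x, hx, rfl⟩ := hoU
    exacts [hA hoA, hx hoA]
  · intro h U hU hnU
    by_contra! hUA
    exact h (Filter.mem_of_superset (hU hnU) fun x hxU hxA => hUA.subset ⟨hxU, hxA⟩)

theorem aNum_filterTop_none :
    aNum (filterTop p) none = sInf {c | ∃ S : Set X, Sᶜ ∉ p ∧ c = #S} := by
  rw [aNum]
  congr 1
  ext c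
  constructor
  · rintro ⟨A, hnA, hcl, rfl⟩
    refine ⟨some ⁻¹' A, (mem_closure_none_filterTop_iff p hnA).1 hcl, ?_⟩
    refine (mk_preimage_of_injective_of_subset_range _ _ (Option.some_injective X) ?_).symm
    intro o ho
    cases o
    exacts [(hnA ho).elim, mem_range_self _]
  · rintro ⟨S, hS, rfl⟩
    have hnS : none ∉ some '' S := by simp
    refine ⟨some '' S, hnS, (mem_closure_none_filterTop_iff p hnS).2 ?_,
      (mk_image_eq (Option.some_injective X)).symm⟩
    rwa [preimage_image_eq _ (Option.some_injective X)]

theorem psiNum_filterTop_none :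
    psiNum (filterTop p) none =
      sInf {c | ∃ Ps : Set (Set X), (∀ P ∈ Ps, P ∈ p) ∧ ⋂₀ Ps = ∅ ∧ c = #Ps} := by
  rw [psiNum]
  congr 1
  ext c
  constructor
  · rintro ⟨Us, hUs, hinter, rfl⟩
    have hnone : ∀ V ∈ Us, none ∈ V := fun V hV => (hinter.symm ▸ rfl : none ∈ ⋂₀ Us) V hV
    refine ⟨(some ⁻¹' ·) '' Us, ?_, ?_, (mk_image_eq_of_injOn _ _ ?_).symm⟩
    · rintro _ ⟨V, hV, rfl⟩
      exact hUs V hV (hnone V hV)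
    · rw [sInter_image, ← preimage_iInter₂, ← sInter_eq_biInter, hinter]
      exact eq_empty_of_forall_notMem fun x => Option.some_ne_none x
    · intro V hV V' hV' hVV'
      ext o
      cases o
      exacts [iff_of_true (hnone V hV) (hnone V' hV'), Set.ext_iff.1 hVV' _]
  · rintro ⟨Ps, hPs, hinter, rfl⟩
    refine ⟨(fun P => insert none (some '' P)) '' Ps, ?_, ?_, (mk_image_eq ?_).symm⟩
    · rintro _ ⟨P, hP, rfl⟩
      exact isOpen_filterTop_insert_none p (hPs P hP)
    · ext o
      cases o with
      | none => simp
      | some x => simpa using (Set.ext_iff.1 hinter x)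
    · intro P P' h
      simpa only [preimage_some_insert_none] using congrArg (some ⁻¹' ·) h

variable {p} {R : Option X → Option X → Prop}

theorem SepCont.setOf_gt_mem (hR : SepCont (filterTop p) R) {x : X} (hx : R (some x) none) :
    {y | R (some x) (some y) ∧ x ≠ y} ∈ p :=
  Filter.mem_of_superset ((hR (some x)).2 ⟨hx, Option.some_ne_none x⟩)
    fun _ hy => ⟨hy.1, fun h => hy.2 (congrArg some h)⟩

theorem SepCont.setOf_lt_mem (hR : SepCont (filterTop p) R) {x : X} (hx : R none (some x)) :
    {y | R (some y) (some x) ∧ y ≠ x} ∈ p :=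
  Filter.mem_of_superset ((hR (some x)).1 ⟨hx, (Option.some_ne_none x).symm⟩)
    fun _ hy => ⟨hy.1, fun h => hy.2 (congrArg some h)⟩

end FilterSpace

section ColumnFilter

variable (W J : Type u) {κ : Cardinal.{u}} (hκ : ℵ₀ ≤ κ)

def columnFilter : Filter (W × J) where
  sets := {P | ∃ F : Finset J, #{z : W × J | z ∉ P ∧ z.2 ∉ F} < κ}
  univ_sets := by
    refine ⟨∅, ?_⟩
    simpa using aleph0_pos.trans_le hκ
  sets_of_superset := by
    rintro P Q ⟨F, hF⟩ hPQ
    refine ⟨F, (mk_le_mk_of_subset ?_).trans_lt hF⟩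
    exact fun z hz => ⟨fun h => hz.1 (hPQ h), hz.2⟩
  inter_sets := by
    classical
    rintro P Q ⟨F, hF⟩ ⟨G, hG⟩
    refine ⟨F ∪ G, lt_of_le_of_lt (mk_le_mk_of_subset ?_)
      ((mk_union_le _ _).trans_lt (add_lt_of_lt hκ hF hG))⟩
    rintro z ⟨hPQ, hFG⟩
    rw [Finset.mem_union, not_or] at hFG
    by_cases hP : z ∈ P
    exacts [Or.inr ⟨fun hQ => hPQ ⟨hP, hQ⟩, hFG.2⟩, Or.inl ⟨hP, hFG.1⟩]

variable {W J}

theorem compl_mem_columnFilter {A : Set (W × J)} (hA : #A < κ) : Aᶜ ∈ columnFilter W J hκ :=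
  ⟨∅, (mk_le_mk_of_subset fun _ hz => not_not.1 hz.1).trans_lt hA⟩

theorem exists_forall_mk_column_diff_lt {P : Set (W × J)} (hP : P ∈ columnFilter W J hκ) :
    ∃ F : Finset J, ∀ j ∉ F, #{w | (w, j) ∉ P} < κ := by
  obtain ⟨F, hF⟩ := hP
  refine ⟨F, fun j hj => lt_of_le_of_lt ?_ hF⟩
  exact mk_le_of_injective (f := fun w : {w | (w, j) ∉ P} => ⟨(w.1, j), w.2, hj⟩)
    fun w w' h => Subtype.ext (congrArg Prod.fst (congrArg Subtype.val h))

theorem isFree_columnFilter [Infinite J] (hW : κ ≤ #W) : IsFree (columnFilter W J hκ) := by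
  refine ⟨fun hempty => ?_, eq_empty_of_forall_notMem fun z hz => ?_⟩
  · obtain ⟨F, hF⟩ := exists_forall_mk_column_diff_lt hκ hempty
    obtain ⟨j, hj⟩ := Infinite.exists_notMem_finset F
    have hcol := hF j hj
    simp only [mem_empty_iff_false, not_false_eq_true, ofPred_true, mk_univ] at hcol
    exact hcol.not_ge hW
  · refine hz {z}ᶜ (compl_mem_columnFilter hκ ?_) rfl
    rw [mk_singleton]
    exact one_lt_aleph0.trans_le hκ

theorem sInter_nonempty_of_countable [Uncountable J] (hW : κ < #W) {Ps : Set (Set (W × J))}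
    (hPs : Ps.Countable) (hPsp : ∀ P ∈ Ps, P ∈ columnFilter W J hκ) : (⋂₀ Ps).Nonempty := by
  choose! F hF using fun P hP => exists_forall_mk_column_diff_lt hκ (hPsp P hP)
  obtain ⟨j, hj⟩ : ∃ j, j ∉ ⋃ P ∈ Ps, (F P : Set J) := by
    by_contra! h
    exact not_countable (countable_univ_iff.1
      ((hPs.biUnion fun P _ => (F P).countable_toSet).mono fun j _ => h j))
  have hsmall : #(⋃ P : Ps, {w | (w, j) ∉ (P : Set (W × J))}) ≤ κ :=
    mk_iUnion_le_of_le hκ ((le_aleph0_iff_set_countable.2 hPs).trans hκ)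
      fun P => (hF P P.2 j fun hjP => hj (mem_biUnion P.2 hjP)).le
  obtain ⟨w, -, hw⟩ := exists_mem_notMem_of_mk_lt (hsmall.trans_lt (mk_univ.symm ▸ hW))
  exact ⟨(w, j), fun P hP => by_contra fun hwP => hw (mem_iUnion.2 ⟨⟨P, hP⟩, hwP⟩)⟩

theorem setOf_snd_ne_mem_columnFilter (j : J) : {z : W × J | z.2 ≠ j} ∈ columnFilter W J hκ :=
  ⟨{j}, by simpa using aleph0_pos.trans_le hκ⟩

theorem psiNum_filterTop_columnFilter [Uncountable J] (hJ : #J ≤ ℵ₁) (hW : κ < #W) :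
    psiNum (filterTop (columnFilter W J hκ)) none = ℵ₁ := by
  set cols : Set (Set (W × J)) := range fun j => {z | z.2 ≠ j}
  have hcols : #cols ∈ {c | ∃ Ps : Set (Set (W × J)),
      (∀ P ∈ Ps, P ∈ columnFilter W J hκ) ∧ ⋂₀ Ps = ∅ ∧ c = #Ps} :=
    ⟨cols, forall_mem_range.2 (setOf_snd_ne_mem_columnFilter hκ),
      eq_empty_of_forall_notMem fun z hz => hz _ ⟨z.2, rfl⟩ rfl, rfl⟩
  rw [psiNum_filterTop_none]
  refine le_antisymm ((csInf_le' hcols).trans (mk_range_le.trans hJ)) (le_csInf ⟨_, hcols⟩ ?_)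
  rintro _ ⟨Ps, hPs, hinter, rfl⟩
  by_contra! hlt
  have hPsc : Ps.Countable := le_aleph0_iff_set_countable.1 (lt_aleph_one_iff.1 hlt)
  exact (sInter_nonempty_of_countable hκ hW hPsc hPs).ne_empty hinter

theorem aNum_filterTop_columnFilter [Infinite J] (hJ : #J ≤ κ) (hW : κ ≤ #W) :
    aNum (filterTop (columnFilter W J hκ)) none = κ := by
  obtain ⟨B, hB⟩ := le_mk_iff_exists_set.1 hW
  have hBJ : #(B ×ˢ Set.univ : Set (W × J)) = κ := by
    rw [mk_congr (Equiv.Set.prod B Set.univ), mk_prod, lift_id, lift_id, mk_univ, hB]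
    exact mul_eq_left hκ hJ (mk_ne_zero J)
  have hmem : κ ∈ {c | ∃ S : Set (W × J), Sᶜ ∉ columnFilter W J hκ ∧ c = #S} := by
    refine ⟨B ×ˢ Set.univ, fun hS => ?_, hBJ.symm⟩
    obtain ⟨F, hF⟩ := exists_forall_mk_column_diff_lt hκ hS
    obtain ⟨j, hj⟩ := Infinite.exists_notMem_finset F
    have hcol := hF j hj
    simp only [mem_compl_iff, mem_prod, mem_univ, and_true, not_not] at hcol
    exact hcol.ne hB
  rw [aNum_filterTop_none]
  refine le_antisymm (csInf_le' hmem) (le_csInf ⟨_, hmem⟩ ?_)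
  rintro _ ⟨S, hS, rfl⟩
  by_contra! hlt
  exact hS (compl_mem_columnFilter hκ hlt)

/-- Given members `{y | r x y}` for `x ∈ S`, a pigeonhole argument gives, in each column where
`S` has more than `κ` points, more than `κ` of them sharing the finite set of exceptional
columns. Two such columns avoiding each other's exceptional sets then contain `x`, `y` with
`r x y` and `r y x`. -/
theorem countable_setOf_lt_mk_inter_column (hJ : #J ≤ κ) {r : W × J → W × J → Prop}
    (hr : ∀ x y, r x y → ¬ r y x) {S : Set (W × J)}
    (hS : ∀ x ∈ S, {y | r x y} ∈ columnFilter W J hκ) :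
    {j | κ < #(S ∩ Prod.snd ⁻¹' {j} : Set (W × J))}.Countable := by
  by_contra hT
  choose! F hF using hS
  have hcol : ∀ j, κ < #(S ∩ Prod.snd ⁻¹' {j} : Set (W × J)) →
      ∃ G, ∃ t ⊆ S ∩ Prod.snd ⁻¹' {j}, κ < #t ∧ ∀ x ∈ t, F x = G :=
    fun j hj => exists_subset_lt_mk_forall_eq hκ (mk_finset_le_of_le hκ hJ) hj F
  choose! G t htS ht hFG using hcol
  obtain ⟨a, ha, k, hk, hka, hak⟩ := exists_mem_mem_notMem_finset_of_not_countable hT G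
  obtain ⟨x, hx, y, hy, hyx, hxy⟩ := exists_mem_mem_notMem_notMem hκ (ht a ha).le (ht k hk)
    (fun x => {z | z ∉ {y | r x y} ∧ z.2 ∉ F x}) fun x hx => hF x <| by
      rcases hx with hx | hx
      exacts [(htS a ha hx).1, (htS k hk hx).1]
  have hrxy : r x y := by
    by_contra hn
    refine hyx ⟨hn, ?_⟩
    rw [hFG a ha x hx, (htS k hk hy).2]
    exact hka
  have hryx : r y x := by
    by_contra hn
    refine hxy ⟨hn, ?_⟩
    rw [hFG k hk y hy, (htS a ha hx).2]
    exact hak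
  exact hr x y hrxy hryx

theorem not_exists_sepCont_filterTop_columnFilter [Uncountable J] (hJ : #J ≤ κ) (hW : κ < #W) :
    ¬ ∃ R, SelRel R ∧ SepCont (filterTop (columnFilter W J hκ)) R := by
  rintro ⟨R, ⟨htot, hanti⟩, hR⟩
  have hasymm (x y : W × J) (hxy : R (some x) (some y) ∧ x ≠ y) :
      ¬ (R (some y) (some x) ∧ y ≠ x) :=
    fun hyx => hxy.2 (Option.some_injective _ (hanti _ _ hxy.1 hyx.1))
  have hbelow := countable_setOf_lt_mk_inter_column hκ hJ hasymm
    (S := {x | R (some x) none}) fun x hx => hR.setOf_gt_mem hx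
  have habove := countable_setOf_lt_mk_inter_column hκ hJ
    (r := fun x y => R (some y) (some x) ∧ y ≠ x) (fun x y hxy hyx => hasymm y x hxy hyx)
    (S := {x | R none (some x)}) fun x hx => hR.setOf_lt_mem hx
  refine not_countable (countable_univ_iff.1 ((hbelow.union habove).mono fun j _ => ?_))
  apply lt_mk_or_lt_mk_of_lt_mk_union hκ
  have hcover : {x | R (some x) none} ∪ {x | R none (some x)} = Set.univ :=
    eq_univ_of_forall fun x => htot (some x) none
  rw [← union_inter_distrib_right, hcover, univ_inter]
  exact hW.trans_le <| mk_le_of_injective (f := fun w => (⟨(w, j), rfl⟩ : Prod.snd ⁻¹' {j}))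
    fun w w' h => congrArg Prod.fst (congrArg Subtype.val h)

end ColumnFilter

/-- For every infinite cardinal `κ ≥ ω₁` there is a set `Z` and a free filter
`p` on `Z` with `ψ(Z_p) = ω₁`, `a(Z_p) = κ`, and `Z_p` admitting no separately continuous
selection relation. -/
theorem stmt11 (κ : Cardinal.{u}) (hκ : Cardinal.aleph 1 ≤ κ) :
    ∃ (Z : Type u) (p : Filter Z), IsFree p ∧
      psiNum (filterTop p) (none : Option Z) = Cardinal.aleph 1 ∧
      aNum (filterTop p) (none : Option Z) = κ ∧
      ¬ ∃ R : Option Z → Option Z → Prop, SelRel R ∧ SepCont (filterTop p) R := by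
  have hκ0 : ℵ₀ ≤ κ := aleph0_lt_aleph_one.le.trans hκ
  obtain ⟨W, hW⟩ : ∃ W : Type u, #W = Order.succ κ := ⟨_, mk_out _⟩
  obtain ⟨J, hJ⟩ : ∃ J : Type u, #J = ℵ₁ := ⟨_, mk_out _⟩
  have : Uncountable J := aleph0_lt_mk_iff.1 (hJ ▸ aleph0_lt_aleph_one)
  have hκW : κ < #W := hW ▸ Order.lt_succ κ
  have hJκ : #J ≤ κ := hJ.trans_le hκ
  exact ⟨W × J, columnFilter W J hκ0, isFree_columnFilter hκ0 hκW.le,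
    psiNum_filterTop_columnFilter hκ0 hJ.le hκW, aNum_filterTop_columnFilter hκ0 hJκ hκW.le,
    not_exists_sepCont_filterTop_columnFilter hκ0 hJκ hκW⟩
end

section
/- If X_p and Y_q are filter spaces such that a(X_p) = ‖p‖ = a(Y_q) = ‖q‖, then the product space X_p × Y_q is weakly orderable by a linear order in which (p, q) is the maximum element. -/
/-!
Every set of size `< κ = ‖p‖` misses a member of `p`, so enumerating a member of `p` of
size `κ` in order type `κ` gives a rank `F : X_p → κ + 1` with `F⁻¹ {κ} = {p}` and `F x → κ`
along `p`; likewise `G` on `Y_q`. Order the product lexicographically by the level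
`min (F u) (G v)`, then by the block (the row `{x} × {v | G v > F x}` or the column
`{u | F u ≥ G y} × {y}` of the level), then by `max (F u) (G v)`. In that order `(x, q)` and
`(p, y)` are the last points of their blocks and limits of the rest of them, and `(p, q)` is
the maximum; so every open ray is a neighbourhood of each of its points.
-/

open Set

universe u v w y

open Cardinal Filter Function

theorem isOpen_singleton_some {X : Type u} (p : Filter X) (x : X) :
    (filterTop p).IsOpen {some x} :=
  fun h => absurd h (by simp)

theorem WOBy.of_isOpen_rays {Z : Type u} {t : TopologicalSpace Z} {r : LinearOrder Z}
    (hlt : ∀ a, t.IsOpen {z | r.lt z a}) (hgt : ∀ a, t.IsOpen {z | r.lt a z}) : WOBy t r := by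
  have hle : t ≤ ordTop r := le_generateFrom <| by
    rintro _ ⟨a, rfl | rfl⟩
    exacts [hlt a, hgt a]
  exact fun S hS => hle S hS

section Rank

variable {X : Type u} {p : Filter X}

theorem exists_mem_mk_eq_fNorm (p : Filter X) : ∃ P ∈ p, #P = fNorm p := by
  obtain ⟨P, hP, hPκ⟩ := csInf_mem (s := {c : Cardinal.{u} | ∃ P ∈ p, c = #P})
    ⟨_, univ, univ_mem, rfl⟩
  exact ⟨P, hP, hPκ.symm⟩

theorem aleph0_le_fNorm (hp : IsFree p) : ℵ₀ ≤ fNorm p := by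
  obtain ⟨P, hP, hPκ⟩ := exists_mem_mk_eq_fNorm p
  have hcof : p ≤ cofinite := le_cofinite_iff_compl_singleton_mem.2 fun x => by
    obtain ⟨Q, hQ, hxQ⟩ : ∃ Q ∈ p, x ∉ Q := by
      by_contra! h
      exact (hp.2 ▸ h : x ∈ (∅ : Set X))
    exact mem_of_superset hQ fun y hy hyx => hxQ (hyx ▸ hy)
  rw [← hPκ, ← Cardinal.infinite_iff, Set.infinite_coe_iff]
  intro hfin
  exact hp.1 (by simpa using inter_mem hP (hcof hfin.compl_mem_cofinite))

theorem compl_mem_of_mk_lt_aNum {A : Set X} (hA : #A < aNum (filterTop p) none) :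
    Aᶜ ∈ p := by
  by_contra hAc
  have hcl : (none : Option X) ∈ @closure _ (filterTop p) (some '' A) := by
    let _ := filterTop p
    refine mem_closure_iff.2 fun U hU hnone => ?_
    obtain ⟨x, hxU, hxA⟩ : (some ⁻¹' U ∩ A).Nonempty := by
      by_contra hne
      exact hAc (mem_of_superset (hU hnone) fun x hxU hxA => hne ⟨x, hxU, hxA⟩)
    exact ⟨some x, hxU, x, hxA, rfl⟩
  have hle : aNum (filterTop p) none ≤ #(some '' A) := csInf_le' ⟨_, by simp, hcl, rfl⟩
  rw [mk_image_eq (Option.some_injective X)] at hle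
  exact hA.not_ge hle

theorem exists_forall_eventually_lt {ι : Type u} [LinearOrder ι] [NoMaxOrder ι] [Nonempty ι]
    {P : Set X} (hP : P ∈ p) (e : P ≃ ι)
    (hι : ∀ i : ι, #(Iio i) < aNum (filterTop p) none) :
    ∃ f : X → ι, ∀ i, ∀ᶠ x in p, i < f x := by
  classical
  refine ⟨fun x => if h : x ∈ P then e ⟨x, h⟩ else Classical.arbitrary ι, fun i => ?_⟩
  obtain ⟨j, hij⟩ := exists_gt i
  have hsmall : #((fun k => (e.symm k : X)) '' Iio j) < aNum (filterTop p) none :=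
    mk_image_le.trans_lt (hι j)
  filter_upwards [hP, compl_mem_of_mk_lt_aNum hsmall] with x hxP hxA
  rw [dif_pos hxP]
  exact hij.trans_le (not_lt.1 fun hlt => hxA ⟨_, hlt, by simp⟩)

theorem exists_rank (κ : Cardinal.{u}) (hκ : ℵ₀ ≤ κ) {P : Set X} (hP : P ∈ p)
    (hPκ : #P = κ) (hκp : κ ≤ aNum (filterTop p) none) :
    ∃ F : Option X → WithTop κ.ord.ToType, (∀ u, F u = ⊤ ↔ u = none) ∧
      ∀ b < (⊤ : WithTop κ.ord.ToType), (filterTop p).IsOpen {u | b < F u} := by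
  have := Cardinal.noMaxOrder hκ
  have := nonempty_ord_toType (aleph0_pos.trans_le hκ).ne'
  obtain ⟨e⟩ : Nonempty (P ≃ κ.ord.ToType) := Cardinal.eq.1 (by rw [hPκ, mk_ord_toType])
  obtain ⟨f, hf⟩ := exists_forall_eventually_lt hP e fun i =>
    (by simpa using mk_Iio_lt i : #(Iio i) < κ).trans_le hκp
  refine ⟨fun u => u.elim ⊤ fun x => (f x : WithTop _), fun u => ?_, fun b hb => ?_⟩
  · cases u <;> simp
  · lift b to κ.ord.ToType using hb.ne
    intro _
    filter_upwards [hf b] with x hx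
    exact WithTop.coe_lt_coe.2 hx

end Rank

section LexKey

variable {Z α β γ : Type*}

def lexKey (k : Z → α) (M : Z → β) (t : Z → γ) (z : Z) : α ×ₗ β ×ₗ γ :=
  toLex (k z, toLex (M z, t z))

variable {k : Z → α} {M : Z → β} {t : Z → γ}

theorem lexKey_injective (ht : Injective t) : Injective (lexKey k M t) :=
  fun _ _ h => ht (congrArg (fun x => (ofLex (ofLex x).2).2) h)

variable [LinearOrder α] [LinearOrder β] [OrderTop β] [LinearOrder γ]

variable {c : Z} (hc : M c = ⊤) (huniq : ∀ z, M z = ⊤ → k z = k c → z = c)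
include hc huniq

theorem exists_forall_lexKey_lt_of_lt {a : Z} (ha : lexKey k M t a < lexKey k M t c)
    {b₀ : β} (hb₀ : b₀ < ⊤) :
    ∃ b, b₀ ≤ b ∧ b < ⊤ ∧
      ∀ w, k w = k c → b < M w → lexKey k M t a < lexKey k M t w := by
  simp only [lexKey, Prod.Lex.toLex_lt_toLex] at ha ⊢
  rcases ha with hk | ⟨hk, hM⟩
  · exact ⟨b₀, le_rfl, hb₀, fun w hw _ => Or.inl (hw ▸ hk)⟩
  · have hMa : M a < ⊤ := by
      refine lt_top_iff_ne_top.2 fun hMa => ?_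
      obtain rfl := huniq a hMa hk
      simp at hM
    exact ⟨max b₀ (M a), le_max_left _ _, max_lt hb₀ hMa, fun w hw hb =>
      Or.inr ⟨hk.trans hw.symm, Or.inl ((le_max_right _ _).trans_lt hb)⟩⟩

theorem lexKey_lt_of_lt {a : Z} (ha : lexKey k M t c < lexKey k M t a) {w : Z}
    (hw : k w = k c) : lexKey k M t w < lexKey k M t a := by
  simp only [lexKey, Prod.Lex.toLex_lt_toLex] at ha ⊢
  rw [hw]
  refine Or.inl (ha.resolve_right ?_)
  rintro ⟨hk, hM | ⟨hM, ht⟩⟩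
  · exact (hc ▸ hM).not_ge le_top
  · obtain rfl := huniq a (hc ▸ hM.symm) hk.symm
    exact lt_irrefl _ ht

end LexKey

theorem lt_top_of_ne_none {A β : Type*} [PartialOrder β] [OrderTop β] {F : Option A → β}
    (hF : ∀ u, F u = ⊤ ↔ u = none) {u : Option A} (hu : u ≠ none) : F u < ⊤ :=
  lt_top_iff_ne_top.2 ((hF u).not.2 hu)

section ProdKey

variable {ι : Type*} {X Y : Type u} [LinearOrder ι]
  (F : Option X → WithTop ι) (G : Option Y → WithTop ι)

def prodBlock (z : Option X × Option Y) : Option X × Option Y :=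
  if F z.1 < G z.2 then (z.1, none) else (none, z.2)

noncomputable def prodLevel (z : Option X × Option Y) : WithTop ι ×ₗ Cardinal.{u} :=
  toLex (min (F z.1) (G z.2), embeddingToCardinal (prodBlock F G z))

noncomputable abbrev prodKey :
    Option X × Option Y → (WithTop ι ×ₗ Cardinal.{u}) ×ₗ WithTop ι ×ₗ Cardinal.{u} :=
  lexKey (prodLevel F G) (fun z => max (F z.1) (G z.2)) embeddingToCardinal

theorem prodKey_injective : Injective (prodKey F G) :=
  lexKey_injective embeddingToCardinal.injective

variable {F G}

theorem prodLevel_some_left (hG : G none = ⊤) {x : X} {v : Option Y} (h : F (some x) < G v) :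
    prodLevel F G (some x, v) = prodLevel F G (some x, none) := by
  simp [prodLevel, prodBlock, h, hG, min_eq_left h.le, h.trans_le le_top]

theorem prodLevel_some_right (hF : F none = ⊤) {u : Option X} {y : Y} (h : G (some y) ≤ F u) :
    prodLevel F G (u, some y) = prodLevel F G (none, some y) := by
  simp [prodLevel, prodBlock, not_lt.2 h, hF, min_eq_right h]

variable (hF : ∀ u, F u = ⊤ ↔ u = none) (hG : ∀ v, G v = ⊤ ↔ v = none)
include hF hG

theorem prodBlock_eq_self {z : Option X × Option Y} (hz : max (F z.1) (G z.2) = ⊤) :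
    prodBlock F G z = z := by
  obtain ⟨u, v⟩ := z
  unfold prodBlock
  split_ifs with h
  · rw [(hG v).1 (by rwa [max_eq_right h.le] at hz)]
  · rw [(hF u).1 (by rwa [max_eq_left (not_lt.1 h)] at hz)]

theorem eq_of_prodLevel_eq {c : Option X × Option Y} (hc : max (F c.1) (G c.2) = ⊤)
    (z : Option X × Option Y) (hz : max (F z.1) (G z.2) = ⊤)
    (h : prodLevel F G z = prodLevel F G c) : z = c := by
  rw [← prodBlock_eq_self hF hG hz, ← prodBlock_eq_self hF hG hc]
  exact embeddingToCardinal.injective (congrArg (fun l => (ofLex l).2) h)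

theorem exists_forall_prodKey_lt_of_lt {c : Option X × Option Y}
    (hc : max (F c.1) (G c.2) = ⊤) {a : Option X × Option Y} (ha : prodKey F G a < prodKey F G c)
    {b₀ : WithTop ι} (hb₀ : b₀ < ⊤) :
    ∃ b, b₀ ≤ b ∧ b < ⊤ ∧ ∀ w, prodLevel F G w = prodLevel F G c →
      b < max (F w.1) (G w.2) → prodKey F G a < prodKey F G w :=
  exists_forall_lexKey_lt_of_lt (M := fun z : Option X × Option Y => max (F z.1) (G z.2)) hc
    (eq_of_prodLevel_eq hF hG hc) ha hb₀

theorem prodKey_lt_of_lt {c : Option X × Option Y} (hc : max (F c.1) (G c.2) = ⊤)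
    {a : Option X × Option Y} (ha : prodKey F G c < prodKey F G a) {w : Option X × Option Y}
    (hw : prodLevel F G w = prodLevel F G c) : prodKey F G w < prodKey F G a :=
  lexKey_lt_of_lt (M := fun z : Option X × Option Y => max (F z.1) (G z.2)) hc
    (eq_of_prodLevel_eq hF hG hc) ha hw

theorem min_lt_top_of_ne_none {z : Option X × Option Y} (hz : z ≠ (none, none)) :
    min (F z.1) (G z.2) < ⊤ := by
  obtain ⟨u, v⟩ := z
  simpa [lt_top_iff_ne_top, min_eq_top, hF, hG] using hz

theorem prodKey_le_top (z : Option X × Option Y) :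
    prodKey F G z ≤ prodKey F G (none, none) := by
  rcases eq_or_ne z (none, none) with rfl | hz
  · exact le_rfl
  · refine le_of_lt (Prod.Lex.toLex_lt_toLex.2 (Or.inl (Prod.Lex.toLex_lt_toLex.2 (Or.inl ?_))))
    simpa [(hF none).2, (hG none).2] using min_lt_top_of_ne_none hF hG hz

end ProdKey

section Topology

variable {ι : Type*} {X Y : Type u} [LinearOrder ι]
  {F : Option X → WithTop ι} {G : Option Y → WithTop ι} {p : Filter X} {q : Filter Y}

theorem isOpen_prod_filterTop (hF : F none = ⊤) (hG : G none = ⊤)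
    (hFo : ∀ b < ⊤, (filterTop p).IsOpen {u | b < F u})
    (hGo : ∀ b < ⊤, (filterTop q).IsOpen {v | b < G v}) {S : Set (Option X × Option Y)}
    (hrow : ∀ x, (some x, none) ∈ S → ∃ b < ⊤, ∀ v, b < G v → (some x, v) ∈ S)
    (hcol : ∀ y, (none, some y) ∈ S → ∃ b < ⊤, ∀ u, b < F u → (u, some y) ∈ S)
    (htop : (none, none) ∈ S → ∃ b < ⊤, ∀ u v, b < F u → b < G v → (u, v) ∈ S) :
    (prodTop (filterTop p) (filterTop q)).IsOpen S := by
  let _ := filterTop p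
  let _ := filterTop q
  show IsOpen S
  refine isOpen_iff_forall_mem_open.2 ?_
  rintro ⟨_ | x, _ | y⟩ hz
  · obtain ⟨b, hb, hS⟩ := htop hz
    refine ⟨{u | b < F u} ×ˢ {v | b < G v}, fun z hz => hS _ _ hz.1 hz.2,
      IsOpen.prod (hFo b hb) (hGo b hb), ?_⟩
    simpa [hF, hG] using hb
  · obtain ⟨b, hb, hS⟩ := hcol y hz
    refine ⟨{u | b < F u} ×ˢ {some y}, ?_, IsOpen.prod (hFo b hb) (isOpen_singleton_some q y),
      by simpa [hF] using hb⟩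
    rintro ⟨u, v⟩ ⟨hu, rfl⟩
    exact hS u hu
  · obtain ⟨b, hb, hS⟩ := hrow x hz
    refine ⟨{some x} ×ˢ {v | b < G v}, ?_, IsOpen.prod (isOpen_singleton_some p x) (hGo b hb),
      by simpa [hG] using hb⟩
    rintro ⟨u, v⟩ ⟨rfl, hv⟩
    exact hS v hv
  · refine ⟨{some x} ×ˢ {some y}, by simpa using hz, ?_, rfl, rfl⟩
    exact IsOpen.prod (isOpen_singleton_some p x) (isOpen_singleton_some q y)

variable (hF : ∀ u, F u = ⊤ ↔ u = none) (hG : ∀ v, G v = ⊤ ↔ v = none)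
  (hFo : ∀ b < ⊤, (filterTop p).IsOpen {u | b < F u})
  (hGo : ∀ b < ⊤, (filterTop q).IsOpen {v | b < G v})
include hF hG hFo hGo

theorem isOpen_setOf_prodKey_gt (a : Option X × Option Y) :
    (prodTop (filterTop p) (filterTop q)).IsOpen {z | prodKey F G a < prodKey F G z} := by
  have hFn := (hF none).2 rfl
  have hGn := (hG none).2 rfl
  refine isOpen_prod_filterTop hFn hGn hFo hGo (fun x hx => ?_) (fun y hy => ?_) (fun ha => ?_)
  · have hc : max (F (some x)) (G none) = ⊤ := by simp [hGn]
    obtain ⟨b, hxb, hb, hS⟩ := exists_forall_prodKey_lt_of_lt hF hG hc hx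
      (lt_top_of_ne_none hF (Option.some_ne_none x))
    exact ⟨b, hb, fun v hv => hS _ (prodLevel_some_left hGn (hxb.trans_lt hv))
      (lt_max_of_lt_right hv)⟩
  · have hc : max (F none) (G (some y)) = ⊤ := by simp [hFn]
    obtain ⟨b, hyb, hb, hS⟩ := exists_forall_prodKey_lt_of_lt hF hG hc hy
      (lt_top_of_ne_none hG (Option.some_ne_none y))
    exact ⟨b, hb, fun u hu => hS _ (prodLevel_some_right hFn (hyb.trans hu.le))
      (lt_max_of_lt_left hu)⟩
  · have hne : a ≠ (none, none) := by
      rintro rfl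
      exact lt_irrefl (prodKey F G (none, none)) ha
    refine ⟨_, min_lt_top_of_ne_none hF hG hne, fun u v hu hv => ?_⟩
    exact Prod.Lex.toLex_lt_toLex.2 (Or.inl (Prod.Lex.toLex_lt_toLex.2 (Or.inl (lt_min hu hv))))

theorem isOpen_setOf_prodKey_lt (a : Option X × Option Y) :
    (prodTop (filterTop p) (filterTop q)).IsOpen {z | prodKey F G z < prodKey F G a} := by
  have hFn := (hF none).2 rfl
  have hGn := (hG none).2 rfl
  refine isOpen_prod_filterTop hFn hGn hFo hGo (fun x hx => ?_) (fun y hy => ?_) (fun ha => ?_)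
  · have hc : max (F (some x)) (G none) = ⊤ := by simp [hGn]
    exact ⟨F (some x), lt_top_of_ne_none hF (Option.some_ne_none x), fun v hv =>
      prodKey_lt_of_lt hF hG hc hx (prodLevel_some_left hGn hv)⟩
  · have hc : max (F none) (G (some y)) = ⊤ := by simp [hFn]
    exact ⟨G (some y), lt_top_of_ne_none hG (Option.some_ne_none y), fun u hu =>
      prodKey_lt_of_lt hF hG hc hy (prodLevel_some_right hFn hu.le)⟩
  · exact absurd ha (prodKey_le_top hF hG a).not_gt

end Topology

theorem stmt16_general {X : Type u} {Y : Type u}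
    (p : Filter X) (q : Filter Y) (hp : IsFree p)
    (e1 : aNum (filterTop p) (none : Option X) = fNorm p)
    (e2 : fNorm p = aNum (filterTop q) (none : Option Y))
    (e3 : aNum (filterTop q) (none : Option Y) = fNorm q) :
    ∃ r : LinearOrder (Option X × Option Y),
      WOBy (prodTop (filterTop p) (filterTop q)) r ∧
      ∀ z : Option X × Option Y, r.le z (none, none) := by
  have hκ := aleph0_le_fNorm hp
  obtain ⟨P, hP, hPκ⟩ := exists_mem_mk_eq_fNorm p
  obtain ⟨Q, hQ, hQκ⟩ := exists_mem_mk_eq_fNorm q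
  obtain ⟨F, hF, hFo⟩ := exists_rank (fNorm p) hκ hP hPκ e1.ge
  obtain ⟨G, hG, hGo⟩ := exists_rank (fNorm p) hκ hQ (hQκ.trans (e2.trans e3).symm) e2.le
  exact ⟨LinearOrder.lift' (prodKey F G) (prodKey_injective F G),
    WOBy.of_isOpen_rays (isOpen_setOf_prodKey_lt hF hG hFo hGo)
      (isOpen_setOf_prodKey_gt hF hG hFo hGo),
    prodKey_le_top hF hG⟩

/-- If `X_p` and `Y_q` are filter spaces with `a(X_p) = ‖p‖ = a(Y_q) = ‖q‖`,
then `X_p × Y_q` is weakly orderable by a linear order with `(p, q)` the maximum. -/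
theorem stmt16 {X : Type u} {Y : Type u} [Infinite X] [Infinite Y]
    (p : Filter X) (q : Filter Y) (hp : IsFree p) (hq : IsFree q)
    (e1 : aNum (filterTop p) (none : Option X) = fNorm p)
    (e2 : fNorm p = aNum (filterTop q) (none : Option Y))
    (e3 : aNum (filterTop q) (none : Option Y) = fNorm q) :
    ∃ r : LinearOrder (Option X × Option Y),
      WOBy (prodTop (filterTop p) (filterTop q)) r ∧
      ∀ z : Option X × Option Y, r.le z (none, none) :=
  stmt16_general p q hp e1 e2 e3
end

section
/- Let X be a non-discrete orderable Hausdorff space such that the product X × X admits a separately continuous selection relation. Then ψ(X) = a(X). -/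
/-!
`a(X) ≤ ψ(X)` is a fact about the order. If a non-isolated `p` is approached from the left and
`{p} = ⋂ 𝒰` with `𝒰` open, pick `a_U < p` with `[a_U, p] ⊆ U` for each `U ∈ 𝒰`; every `z < p`
misses some `U`, hence lies below `a_U`, so the `a_U` accumulate at `p`.

`ψ(X) ≤ a(X)` comes from the selection on `X × X`. Let `p ∈ closure D \ D` with `|D| = a(X)` and
fix `q`. If `x ≠ q`, then `(x, p)` and `(q, p)` are comparable, and by separate continuity the
comparisons `(x, a) ≺ (q, p)` and `(x, p) ≺ (q, a)` (or their reverses) persist for `a ∈ D` close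
to `p`. So `x` fails one of the `|D|` open conditions "`(x, a)` lies on the same side of `(q, p)`
as `(q, a)`, and `(x, p)` on the same side of `(q, a)` as `(q, p)`", which all hold at `q`.
-/

open Set

universe u v w y

open Filter Topology Cardinal

section CardinalInvariants

variable {X : Type u} [t : TopologicalSpace X]

theorem aNum_le {p : X} {A : Set X} (hpA : p ∉ A) (hA : p ∈ closure A) : aNum t p ≤ #A :=
  csInf_le' ⟨A, hpA, hA, rfl⟩

theorem psiNum_le {p : X} {Us : Set (Set X)} (hUs : ∀ V ∈ Us, IsOpen V) (hp : ⋂₀ Us = {p}) :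
    psiNum t p ≤ #Us :=
  csInf_le' ⟨Us, hUs, hp, rfl⟩

theorem exists_aNum_eq {p : X} (hp : ¬IsOpen ({p} : Set X)) :
    ∃ A : Set X, p ∉ A ∧ p ∈ closure A ∧ aNum t p = #A := by
  have hne : {c | ∃ A : Set X, p ∉ A ∧ p ∈ closure A ∧ c = #A}.Nonempty :=
    ⟨_, {p}ᶜ, fun h => h rfl, dense_compl_singleton_iff_not_open.2 hp p, rfl⟩
  exact csInf_mem hne

theorem exists_psiNum_eq [T1Space X] (p : X) :
    ∃ Us : Set (Set X), (∀ V ∈ Us, IsOpen V) ∧ ⋂₀ Us = {p} ∧ psiNum t p = #Us := by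
  have hnhds : ⋂₀ {U : Set X | IsOpen U ∧ p ∈ U} = {p} := by
    refine subset_antisymm (fun z hz => ?_) (by simp +contextual)
    by_contra hzp
    exact hz {z}ᶜ ⟨isOpen_compl_singleton, Ne.symm hzp⟩ rfl
  have hne : {c | ∃ Us : Set (Set X), (∀ V ∈ Us, IsOpen V) ∧ ⋂₀ Us = {p} ∧ c = #Us}.Nonempty :=
    ⟨_, _, fun V hV => hV.1, hnhds, rfl⟩
  exact csInf_mem hne

end CardinalInvariants

section Selection

variable {Z : Type u}

def SelLT (R : Z → Z → Prop) (u v : Z) : Prop := R u v ∧ u ≠ v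

variable {R : Z → Z → Prop}

theorem SelRel.not_selLT (hR : SelRel R) {u v : Z} (h : SelLT R u v) : ¬SelLT R v u :=
  fun h' => h.2 (hR.2 u v h.1 h'.1)

theorem SelRel.selLT_or_selLT (hR : SelRel R) {u v : Z} (h : u ≠ v) :
    SelLT R u v ∨ SelLT R v u :=
  (hR.1 u v).imp (⟨·, h⟩) (⟨·, h.symm⟩)

open scoped Classical in
/-- The open ray with end point `v` that contains `u` (when `u ≠ v`). -/
def sideRay (R : Z → Z → Prop) (v u : Z) : Set Z :=
  if SelLT R u v then {z | SelLT R z v} else {z | SelLT R v z}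

section Topology

variable [TopologicalSpace Z]

theorem SepCont.isOpen_setOf_selLT_left (hc : SepCont ‹_› R) (v : Z) :
    IsOpen {z | SelLT R z v} :=
  (hc v).1

theorem SepCont.isOpen_setOf_selLT_right (hc : SepCont ‹_› R) (v : Z) :
    IsOpen {z | SelLT R v z} :=
  (hc v).2

theorem SepCont.isOpen_sideRay (hc : SepCont ‹_› R) (v u : Z) : IsOpen (sideRay R v u) := by
  unfold sideRay
  split_ifs
  exacts [hc.isOpen_setOf_selLT_left v, hc.isOpen_setOf_selLT_right v]

end Topology

theorem SelRel.mem_sideRay_self (hR : SelRel R) {u v : Z} (h : u ≠ v) : u ∈ sideRay R v u := by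
  unfold sideRay
  split_ifs with huv
  exacts [huv, (hR.selLT_or_selLT h).resolve_left huv]

theorem SelRel.selLT_iff_of_mem_sideRay (hR : SelRel R) {u v z : Z} (hz : z ∈ sideRay R v u) :
    SelLT R z v ↔ SelLT R u v := by
  unfold sideRay at hz
  split_ifs at hz with huv
  exacts [iff_of_true hz huv, iff_of_false (hR.not_selLT hz) huv]

end Selection

section ProductSelection

variable {X : Type u} [TopologicalSpace X] {R : X × X → X × X → Prop}

theorem SepCont.exists_mem_selLT_selLT (hc : SepCont inferInstance R) {x y b : X} {D : Set X}
    (hb : b ∈ closure D) (h : SelLT R (x, b) (y, b)) :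
    ∃ a ∈ D, SelLT R (x, a) (y, b) ∧ SelLT R (x, b) (y, a) := by
  have h₁ : IsOpen {a | SelLT R (x, a) (y, b)} :=
    (hc.isOpen_setOf_selLT_left (y, b)).preimage (continuous_const.prodMk continuous_id)
  have h₂ : IsOpen {a | SelLT R (x, b) (y, a)} :=
    (hc.isOpen_setOf_selLT_right (x, b)).preimage (continuous_const.prodMk continuous_id)
  obtain ⟨a, ⟨ha₁, ha₂⟩, haD⟩ := mem_closure_iff.1 hb _ (h₁.inter h₂) ⟨h, h⟩
  exact ⟨a, haD, ha₁, ha₂⟩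

theorem SelRel.eq_of_forall_mem_sideRay (hR : SelRel R) (hc : SepCont inferInstance R)
    {p : X} {D : Set X} (hpD : p ∉ D) (hcl : p ∈ closure D) {q x : X}
    (h₁ : ∀ a ∈ D, (x, a) ∈ sideRay R (q, p) (q, a))
    (h₂ : ∀ a ∈ D, (x, p) ∈ sideRay R (q, a) (q, p)) : x = q := by
  by_contra hxq
  rcases hR.selLT_or_selLT (u := (x, p)) (v := (q, p)) (by simpa using hxq) with h | h
  · obtain ⟨a, haD, hxa, hxp⟩ := hc.exists_mem_selLT_selLT hcl h
    exact hR.not_selLT ((hR.selLT_iff_of_mem_sideRay (h₁ a haD)).1 hxa)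
      ((hR.selLT_iff_of_mem_sideRay (h₂ a haD)).1 hxp)
  · obtain ⟨a, haD, hqa, hqp⟩ := hc.exists_mem_selLT_selLT hcl h
    have hap : (q, a) ≠ (q, p) := by simpa using ne_of_mem_of_not_mem haD hpD
    rcases hR.selLT_or_selLT hap with h' | h'
    · exact hR.not_selLT hqp ((hR.selLT_iff_of_mem_sideRay (h₁ a haD)).2 h')
    · exact hR.not_selLT hqa ((hR.selLT_iff_of_mem_sideRay (h₂ a haD)).2 h')

theorem SelRel.psiNum_le_of_mem_closure (hR : SelRel R) (hc : SepCont inferInstance R)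
    {p : X} {D : Set X} (hpD : p ∉ D) (hcl : p ∈ closure D) (q : X) :
    psiNum ‹_› q ≤ #D := by
  set G : D → Set X := fun a =>
    (fun x => (x, (a : X))) ⁻¹' sideRay R (q, p) (q, a) ∩
      (fun x => (x, p)) ⁻¹' sideRay R (q, a) (q, p)
  have hG : ⋂₀ range G = {q} := by
    refine subset_antisymm (fun x hx => ?_) ?_
    · have hx' : ∀ a : D, x ∈ G a := fun a => hx _ (mem_range_self a)
      exact hR.eq_of_forall_mem_sideRay hc hpD hcl (fun a ha => (hx' ⟨a, ha⟩).1)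
        (fun a ha => (hx' ⟨a, ha⟩).2)
    · rw [singleton_subset_iff]
      rintro _ ⟨a, rfl⟩
      have hap : (a : X) ≠ p := ne_of_mem_of_not_mem a.2 hpD
      exact ⟨hR.mem_sideRay_self (by simpa using hap),
        hR.mem_sideRay_self (by simpa using hap.symm)⟩
  have hGopen : ∀ V ∈ range G, IsOpen V := by
    rintro _ ⟨a, rfl⟩
    exact ((hc.isOpen_sideRay _ _).preimage (continuous_id.prodMk continuous_const)).inter
      ((hc.isOpen_sideRay _ _).preimage (continuous_id.prodMk continuous_const))
  calc psiNum ‹_› q ≤ #(range G) := psiNum_le hGopen hG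
    _ ≤ #D := mk_range_le

theorem SelRel.psiSp_le_aNum (hR : SelRel R) (hc : SepCont inferInstance R) {p : X}
    (hp : ¬IsOpen ({p} : Set X)) : psiSp ‹_› ≤ aNum ‹_› p := by
  obtain ⟨D, hpD, hcl, hD⟩ := exists_aNum_eq hp
  have : Nonempty X := ⟨p⟩
  exact hD ▸ ciSup_le (hR.psiNum_le_of_mem_closure hc hpD hcl)

end ProductSelection

section Orderable

variable {X : Type u} [t : TopologicalSpace X]

theorem aNum_le_psiNum_of_nhdsLT_neBot [LinearOrder X] [OrderTopology X] {p : X}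
    (hp : (𝓝[<] p).NeBot) : aNum t p ≤ psiNum t p := by
  obtain ⟨Us, hUs, hUsp, hψ⟩ := exists_psiNum_eq p
  have hlow : ∃ l, l < p := hp.nonempty_of_mem self_mem_nhdsWithin
  have hpU : p ∈ ⋂₀ Us := hUsp ▸ mem_singleton p
  have hgap : ∀ U : Us, ∃ a < p, Icc a p ⊆ U := fun U => by
    obtain ⟨l, hl, hlU⟩ := exists_Ioc_subset_of_mem_nhds ((hUs U U.2).mem_nhds (hpU U U.2)) hlow
    obtain ⟨a, hla, hap⟩ := hp.nonempty_of_mem (Ioo_mem_nhdsLT hl)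
    exact ⟨a, hap, fun z hz => hlU ⟨hla.trans_le hz.1, hz.2⟩⟩
  choose f hfp hfU using hgap
  have hcofinal : ∀ l < p, ∃ U, l < f U := fun l hl => by
    obtain ⟨z, hlz, hzp⟩ := hp.nonempty_of_mem (Ioo_mem_nhdsLT hl)
    have hz : z ∉ ⋂₀ Us := hUsp ▸ hzp.ne
    obtain ⟨U, hU, hzU⟩ : ∃ U ∈ Us, z ∉ U := by simpa [mem_sInter] using hz
    exact ⟨⟨U, hU⟩, hlz.trans (not_le.1 fun h => hzU (hfU _ ⟨h, hzp.le⟩))⟩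
  have hcl : p ∈ closure (range f) := mem_closure_iff_nhds.2 fun O hO => by
    obtain ⟨l, hl, hlO⟩ := exists_Ioc_subset_of_mem_nhds hO hlow
    obtain ⟨U, hU⟩ := hcofinal l hl
    exact ⟨f U, hlO ⟨hU, (hfp U).le⟩, mem_range_self U⟩
  calc aNum t p ≤ #(range f) := aNum_le (fun ⟨U, hU⟩ => (hfp U).ne hU) hcl
    _ ≤ #Us := mk_range_le
    _ = psiNum t p := hψ.symm

theorem aNum_le_psiNum [LinearOrder X] [OrderTopology X] {p : X} (hp : ¬IsOpen ({p} : Set X)) :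
    aNum t p ≤ psiNum t p := by
  have : (𝓝[<] p ⊔ 𝓝[>] p).NeBot := by
    rw [nhdsLT_sup_nhdsGT, ← mem_closure_iff_nhdsWithin_neBot]
    exact dense_compl_singleton_iff_not_open.2 hp p
  rcases sup_neBot.1 this with h | h
  · exact aNum_le_psiNum_of_nhdsLT_neBot h
  · exact aNum_le_psiNum_of_nhdsLT_neBot (X := Xᵒᵈ) (p := OrderDual.toDual p) h

theorem Orderable.aNum_le_psiNum (hord : Orderable t) {p : X} (hp : ¬IsOpen ({p} : Set X)) :
    aNum t p ≤ psiNum t p := by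
  obtain ⟨r, hr⟩ := hord
  let := r
  have : OrderTopology X := by
    refine ⟨hr.symm.trans (congrArg TopologicalSpace.generateFrom ?_)⟩
    ext S
    exact exists_congr fun a => or_comm
  exact _root_.aNum_le_psiNum hp

end Orderable

theorem stmt19_general {X : Type u} [t : TopologicalSpace X]
    (hord : Orderable t)
    (hnd : ∃ p : X, ¬ IsOpen ({p} : Set X))
    (hsel : ∃ R : X × X → X × X → Prop, SelRel R ∧
      SepCont (inferInstance : TopologicalSpace (X × X)) R) :
    psiSp t = aSp t := by
  obtain ⟨R, hR, hc⟩ := hsel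
  obtain ⟨p, hp⟩ := hnd
  refine le_antisymm (le_csInf ⟨_, p, hp, rfl⟩ ?_) ?_
  · rintro _ ⟨q, hq, rfl⟩
    exact hR.psiSp_le_aNum hc hq
  · calc aSp t ≤ aNum t p := csInf_le' ⟨p, hp, rfl⟩
      _ ≤ psiNum t p := hord.aNum_le_psiNum hp
      _ ≤ psiSp t := le_ciSup bddAbove_of_small p

/-- If `X` is a non-discrete orderable Hausdorff space such that `X × X`
admits a separately continuous selection relation, then `ψ(X) = a(X)`. -/
theorem stmt19 {X : Type u} [t : TopologicalSpace X] [T2Space X]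
    (hord : Orderable t)
    (hnd : ∃ p : X, ¬ IsOpen ({p} : Set X))
    (hsel : ∃ R : X × X → X × X → Prop, SelRel R ∧
      SepCont (inferInstance : TopologicalSpace (X × X)) R) :
    psiSp t = aSp t :=
  stmt19_general (t := t) hord hnd hsel
end
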